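/- For any connected graphs G and H, if γ_P(G) = v_s(G) and γ_P(H) = v_s(H), then γ_P(G)·γ_P(H) ≤ γ_P(G □ H). -/

import Mathlib

namespace PaperPD

open SimpleGraph

variable {V : Type} {W : Type}

/-- Observation process for power domination on a simple graph. -/
inductive Observed (G : SimpleGraph V) (S : Set V) : V → Prop
  | mem : ∀ v ∈ S, Observed G S v
  | dom : ∀ u v, u ∈ S → G.Adj u v → Observed G S v
  | prop : ∀ u v, Observed G S u → G.Adj u v →
      (∀ w, G.Adj u w → w ≠ v → Observed G S w) → Observed G S v

/-- `S` is a power dominating set of `G`. -/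
def IsPDS (G : SimpleGraph V) (S : Set V) : Prop := ∀ v, Observed G S v

/-- Power domination number. -/
noncomputable def pdNum (G : SimpleGraph V) [Fintype V] : ℕ :=
  sInf {n | ∃ S : Finset V, S.card = n ∧ IsPDS G ↑S}

/-- Zero forcing process. -/
inductive Forced (G : SimpleGraph V) (S : Set V) : V → Prop
  | mem : ∀ v ∈ S, Forced G S v
  | prop : ∀ u v, Forced G S u → G.Adj u v →
      (∀ w, G.Adj u w → w ≠ v → Forced G S w) → Forced G S v

/-- Zero forcing number. -/
noncomputable def zNum (G : SimpleGraph V) [Fintype V] : ℕ :=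
  sInf {n | ∃ S : Finset V, S.card = n ∧ ∀ v, Forced G S v}

/-- Domination number. -/
noncomputable def domNum (G : SimpleGraph V) [Fintype V] : ℕ :=
  sInf {n | ∃ S : Finset V, S.card = n ∧ ∀ v, ∃ u ∈ S, v = u ∨ G.Adj u v}

/-- No induced `K_{1,3}`. -/
def ClawFree (G : SimpleGraph V) : Prop :=
  ∀ x a b c : V, a ≠ b → a ≠ c → b ≠ c →
    G.Adj x a → G.Adj x b → G.Adj x c →
    ¬ G.Adj a b → ¬ G.Adj a c → ¬ G.Adj b c → False

/-- No induced `K₄` minus an edge. -/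
def DiamondFree (G : SimpleGraph V) : Prop :=
  ∀ a b c d : V, a ≠ b → a ≠ c → a ≠ d → b ≠ c → b ≠ d → c ≠ d →
    G.Adj a b → G.Adj a c → G.Adj b c → G.Adj b d → G.Adj c d →
    ¬ G.Adj a d → False

/-- A leaf: a vertex with exactly one neighbor. -/
def IsLeaf (G : SimpleGraph V) (v : V) : Prop := ∃! u, G.Adj v u

/-- A strong support vertex: adjacent to at least two leaves. -/
def IsStrongSupport (G : SimpleGraph V) (x : V) : Prop :=
  ∃ a b, a ≠ b ∧ G.Adj x a ∧ G.Adj x b ∧ IsLeaf G a ∧ IsLeaf G b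

/-- Number of strong support vertices. -/
noncomputable def ssCount (G : SimpleGraph V) : ℕ :=
  Nat.card {v // IsStrongSupport G v}

/-- Connected with no bridges. -/
def TwoEdgeConnected (G : SimpleGraph V) : Prop :=
  G.Connected ∧ ∀ e, ¬ G.IsBridge e

/-- A loopless multigraph, given by symmetric edge multiplicities. -/
structure Multigraph (W : Type) where
  mult : W → W → ℕ
  symm : ∀ u v, mult u v = mult v u
  loopless : ∀ v, mult v v = 0

/-- Underlying simple graph of a multigraph. -/
def Multigraph.toSimple (M : Multigraph W) : SimpleGraph W where
  Adj u v := u ≠ v ∧ 0 < M.mult u v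
  symm := ⟨by intro u v h; exact ⟨h.1.symm, by rw [M.symm]; exact h.2⟩⟩
  loopless := ⟨by intro v h; exact h.1 rfl⟩

/-- Degree of a vertex in a multigraph (counting multiplicities). -/
def Multigraph.degree [Fintype W] (M : Multigraph W) (v : W) : ℕ :=
  ∑ u, M.mult v u

/-- Bridgeless multigraph: no single edge is a cut edge (a parallel edge
is never a bridge). -/
def Multigraph.Bridgeless (M : Multigraph W) : Prop :=
  ∀ u v, M.mult u v = 1 → ¬ M.toSimple.IsBridge s(u, v)

/-- A 2-factor of a multigraph, given by sub-multiplicities. -/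
def Multigraph.IsTwoFactor [Fintype W] (M : Multigraph W) (f : W → W → ℕ) : Prop :=
  (∀ u v, f u v ≤ M.mult u v) ∧ (∀ u v, f u v = f v u) ∧ (∀ v, ∑ u, f v u = 2)

/-- Observation process for power domination on a multigraph: propagation
only happens along single edges. -/
inductive MObserved (M : Multigraph W) (S : Set W) : W → Prop
  | mem : ∀ v ∈ S, MObserved M S v
  | dom : ∀ u v, u ∈ S → 0 < M.mult u v → MObserved M S v
  | prop : ∀ u v, MObserved M S u → M.mult u v = 1 →
      (∀ w, 0 < M.mult u w → w ≠ v → MObserved M S w) → MObserved M S v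

/-- Power domination number of a multigraph. -/
noncomputable def mpdNum (M : Multigraph W) [Fintype W] : ℕ :=
  sInf {n | ∃ S : Finset W, S.card = n ∧ ∀ v, MObserved M ↑S v}

/-! A corner `(aᵢ, bⱼ)` of the block `{x, a₁, a₂} × {y, b₁, b₂}` built from a strong support
`x` of `G` with leaves `a₁, a₂` and a strong support `y` of `H` with leaves `b₁, b₂` has only the
neighbours `(x, bⱼ)` and `(aᵢ, y)`, and each of them has a second corner as neighbour. So no corner
is ever observed by domination or propagation from outside the block: every power dominating set
of `G □ H` meets it, hence meets `leafStar G x ×ˢ leafStar H y`. These sets are pairwise disjoint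
for distinct pairs of strong supports, so `v_s(G) v_s(H) ≤ γ_P(G □ H)`. -/

open Function

lemma IsLeaf.eq_of_adj {G : SimpleGraph V} {a x u : V} (ha : IsLeaf G a) (hx : G.Adj x a)
    (hu : G.Adj a u) : u = x := by
  obtain ⟨_, -, huniq⟩ := ha
  rw [huniq u hu, huniq x hx.symm]

lemma IsStrongSupport.not_isLeaf {G : SimpleGraph V} {x : V} (hx : IsStrongSupport G x) :
    ¬ IsLeaf G x := by
  obtain ⟨a, b, hab, hxa, hxb, -, -⟩ := hx
  rintro ⟨_, -, huniq⟩
  exact hab ((huniq a hxa).trans (huniq b hxb).symm)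

def IsLeafPair (G : SimpleGraph V) (x a₁ a₂ : V) : Prop :=
  a₁ ≠ a₂ ∧ G.Adj x a₁ ∧ G.Adj x a₂ ∧ IsLeaf G a₁ ∧ IsLeaf G a₂

def leafStar (G : SimpleGraph V) (x : V) : Set V :=
  {z | z = x ∨ (IsLeaf G z ∧ G.Adj x z)}

section LeafPair

variable {G : SimpleGraph V} {x a₁ a₂ : V}

lemma IsLeafPair.subset_leafStar (h : IsLeafPair G x a₁ a₂) :
    ({a₁, a₂} : Set V) ⊆ leafStar G x := by
  obtain ⟨-, h₁, h₂, l₁, l₂⟩ := h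
  rintro c (rfl | rfl)
  exacts [Or.inr ⟨l₁, h₁⟩, Or.inr ⟨l₂, h₂⟩]

lemma IsLeafPair.adj_other {c u : V} (h : IsLeafPair G x a₁ a₂) (hc : c ∈ ({a₁, a₂} : Set V))
    (hu : G.Adj u c) : u = x ∧ ∃ c' ∈ ({a₁, a₂} : Set V), c' ≠ c ∧ G.Adj u c' := by
  obtain ⟨hne, h₁, h₂, l₁, l₂⟩ := h
  rcases hc with rfl | rfl
  · obtain rfl := l₁.eq_of_adj h₁ hu.symm
    exact ⟨rfl, a₂, Or.inr rfl, hne.symm, h₂⟩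
  · obtain rfl := l₂.eq_of_adj h₂ hu.symm
    exact ⟨rfl, a₁, Or.inl rfl, hne, h₁⟩

end LeafPair

lemma IsStrongSupport.eq_of_mem_leafStar {G : SimpleGraph V} {x x' z : V}
    (hx : IsStrongSupport G x) (hx' : IsStrongSupport G x')
    (hz : z ∈ leafStar G x) (hz' : z ∈ leafStar G x') : x = x' := by
  rcases hz with rfl | ⟨hlz, hadj⟩ <;> rcases hz' with rfl | ⟨hlz', hadj'⟩
  · rfl
  · exact absurd hlz' hx.not_isLeaf
  · exact absurd hlz hx'.not_isLeaf
  · exact hlz.eq_of_adj hadj' hadj.symm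

lemma leafStar_pairwiseDisjoint (G : SimpleGraph V) :
    Pairwise (Disjoint on fun x : {x // IsStrongSupport G x} => leafStar G x) :=
  fun x x' hne => Set.disjoint_left.mpr fun _ hz hz' =>
    hne (Subtype.ext (x.2.eq_of_mem_leafStar x'.2 hz hz'))

lemma not_observed_leafPair_prod {G : SimpleGraph V} {H : SimpleGraph W} {S : Set (V × W)}
    {x a₁ a₂ : V} {y b₁ b₂ : W} (hG : IsLeafPair G x a₁ a₂) (hH : IsLeafPair H y b₁ b₂)
    (hS : Disjoint S (leafStar G x ×ˢ leafStar H y)) {v : V × W}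
    (hv : Observed (G □ H) S v) : v ∉ ({a₁, a₂} : Set V) ×ˢ ({b₁, b₂} : Set W) := by
  induction hv with
  | mem v hvS =>
    rintro ⟨hv₁, hv₂⟩
    exact Set.disjoint_left.mp hS hvS ⟨hG.subset_leafStar hv₁, hH.subset_leafStar hv₂⟩
  | dom u v huS hadj =>
    rintro ⟨hv₁, hv₂⟩
    refine Set.disjoint_left.mp hS huS ?_
    rcases hadj with ⟨hadj, heq⟩ | ⟨hadj, heq⟩
    · exact ⟨Or.inl (hG.adj_other hv₁ hadj).1, heq ▸ hH.subset_leafStar hv₂⟩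
    · exact ⟨heq ▸ hG.subset_leafStar hv₁, Or.inl (hH.adj_other hv₂ hadj).1⟩
  | prop u v _ hadj _ _ ih =>
    rintro ⟨hv₁, hv₂⟩
    rcases hadj with ⟨hadj, heq⟩ | ⟨hadj, heq⟩
    · obtain ⟨-, c, hc, hne, hadj'⟩ := hG.adj_other hv₁ hadj
      exact ih (c, v.2) (Or.inl ⟨hadj', heq⟩) (fun h => hne (congrArg Prod.fst h)) ⟨hc, hv₂⟩
    · obtain ⟨-, c, hc, hne, hadj'⟩ := hH.adj_other hv₂ hadj
      exact ih (v.1, c) (Or.inr ⟨hadj', heq⟩) (fun h => hne (congrArg Prod.snd h)) ⟨hv₁, hc⟩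

lemma IsPDS.inter_leafStar_prod_nonempty {G : SimpleGraph V} {H : SimpleGraph W}
    {S : Set (V × W)} (hS : IsPDS (G □ H) S) {x : V} {y : W}
    (hx : IsStrongSupport G x) (hy : IsStrongSupport H y) :
    (S ∩ leafStar G x ×ˢ leafStar H y).Nonempty := by
  obtain ⟨a₁, a₂, hG⟩ := hx
  obtain ⟨b₁, b₂, hH⟩ := hy
  by_contra h
  rw [Set.not_nonempty_iff_eq_empty, ← Set.disjoint_iff_inter_eq_empty] at h
  exact not_observed_leafPair_prod hG hH h (hS (a₁, b₁)) ⟨Or.inl rfl, Or.inl rfl⟩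

lemma natCard_le_card_of_pairwiseDisjoint {α ι : Type*} (S : Finset α) (B : ι → Set α)
    (hB : Pairwise (Disjoint on B)) (hS : ∀ i, (↑S ∩ B i).Nonempty) : Nat.card ι ≤ S.card := by
  choose f hfS hfB using hS
  have hinj : Function.Injective fun i => (⟨f i, hfS i⟩ : S) := by
    intro i j hij
    have hfij : f i = f j := congrArg Subtype.val hij
    by_contra hne
    exact Set.disjoint_left.mp (hB hne) (hfB i) (hfij ▸ hfB j)
  simpa using Nat.card_le_card_of_injective _ hinj

lemma ssCount_mul_ssCount_le_card_of_isPDS {G : SimpleGraph V} {H : SimpleGraph W}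
    {S : Finset (V × W)} (hS : IsPDS (G □ H) ↑S) : ssCount G * ssCount H ≤ S.card := by
  rw [ssCount, ssCount, ← Nat.card_prod]
  refine natCard_le_card_of_pairwiseDisjoint S (fun p => leafStar G p.1 ×ˢ leafStar H p.2)
    ?_ fun p => hS.inter_leafStar_prod_nonempty p.1.2 p.2.2
  intro p q hpq
  rw [Function.onFun, Set.disjoint_prod]
  by_cases h₁ : p.1 = q.1
  · exact Or.inr (leafStar_pairwiseDisjoint H fun h₂ => hpq (Prod.ext h₁ h₂))
  · exact Or.inl (leafStar_pairwiseDisjoint G h₁)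

lemma exists_isPDS_card_eq_pdNum [Fintype V] (G : SimpleGraph V) :
    ∃ S : Finset V, S.card = pdNum G ∧ IsPDS G ↑S :=
  Nat.sInf_mem (s := {n | ∃ S : Finset V, S.card = n ∧ IsPDS G ↑S})
    ⟨_, Finset.univ, rfl, fun v => Observed.mem v (Finset.mem_coe.2 (Finset.mem_univ v))⟩

theorem stmt11_general {V W : Type} [Fintype V] [Fintype W]
    (G : SimpleGraph V) (H : SimpleGraph W)
    (he₁ : pdNum G = ssCount G) (he₂ : pdNum H = ssCount H) :
    pdNum G * pdNum H ≤ pdNum (G.boxProd H) := by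
  obtain ⟨S, hcard, hS⟩ := exists_isPDS_card_eq_pdNum (G □ H)
  rw [he₁, he₂, ← hcard]
  exact ssCount_mul_ssCount_le_card_of_isPDS hS

theorem stmt11 {V W : Type} [Fintype V] [Fintype W]
    (G : SimpleGraph V) (H : SimpleGraph W)
    (hG : G.Connected) (hH : H.Connected)
    (he₁ : pdNum G = ssCount G) (he₂ : pdNum H = ssCount H) :
    pdNum G * pdNum H ≤ pdNum (G.boxProd H) :=
  stmt11_general G H he₁ he₂

end PaperPD
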